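/- arXiv:1111.1901 — 2 statements merged into one kernel-verified Lean document; each statement's English description precedes it below -/
import Mathlib

section
/- For the Wigner link function L_W and any pair-matched non-Catalan word w of length 2t, lim_{n→∞} #Π*_{L_W,n}(w)/n^{t+1} = 0. -/
/-!
If a closed walk of length `2t` whose steps are matched by the letters of a pair-matched word
(matched steps traverse the same edge) visits more than `t` vertices, the word is Catalan. Each
newly visited vertex is entered along the first occurrence of a letter, and there are only `t`
letters, so these first occurrences are exactly the steps entering new vertices. The step leaving
the last new vertex is then a repeated letter, which forces it to retrace the step just taken:
the word has a double letter, and deleting it together with the detour leaves a shorter walk of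
the same kind. Hence for a non-Catalan word every circuit in `Π*_{L_W,n}(w)` takes at most `t`
values, so there are at most `t ^ (2t + 1) * n ^ t` of them.
-/

open Filter Topology

/-- A word `w` of length `h` (a function from positions to letters) is
pair-matched if every letter occurs exactly twice. -/
def PairMatched {h : ℕ} (w : Fin h → ℕ) : Prop :=
  ∀ i, (Finset.univ.filter fun j => w j = w i).card = 2

/-- A word is reducible to the empty word by successively removing adjacent
double letters. -/
inductive CatalanReducible : List ℕ → Prop
  | nil : CatalanReducible []
  | step (l₁ l₂ : List ℕ) (a : ℕ) :
      CatalanReducible (l₁ ++ l₂) → CatalanReducible (l₁ ++ a :: a :: l₂)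

/-- A word (as a function) is Catalan if its list of letters is reducible to
the empty word by successive removal of adjacent double letters. -/
def CatalanWord {h : ℕ} (w : Fin h → ℕ) : Prop := CatalanReducible (List.ofFn w)

/-- `Π*_{L_T,n}(w)`: circuits `π : {0,…,2t} → {1,…,n}` (coded by `Fin n`) with
`π(0) = π(2t)` such that matching letters of `w` force equal absolute
increments `|π(i−1) − π(i)|`. -/
def toepStar (t n : ℕ) (w : Fin (2 * t) → ℕ) : Set (Fin (2 * t + 1) → Fin n) :=
  {π | π 0 = π (Fin.last (2 * t)) ∧ ∀ i j : Fin (2 * t), w i = w j →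
    ((π i.castSucc : ℤ) - (π i.succ : ℤ)).natAbs
      = ((π j.castSucc : ℤ) - (π j.succ : ℤ)).natAbs}

/-- `Π*_{L_W,n}(w)`: circuits with `π(0) = π(2t)` such that matching letters of
`w` force equal Wigner link values `(min, max)` of consecutive entries. -/
def wignerStar (t n : ℕ) (w : Fin (2 * t) → ℕ) : Set (Fin (2 * t + 1) → Fin n) :=
  {π | π 0 = π (Fin.last (2 * t)) ∧ ∀ i j : Fin (2 * t), w i = w j →
    (min (π i.castSucc) (π i.succ), max (π i.castSucc) (π i.succ))
      = (min (π j.castSucc) (π j.succ), max (π j.castSucc) (π j.succ))}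

/-- Position `i` is a generating vertex of `w`: the first occurrence of its letter. -/
def IsGen {h : ℕ} (w : Fin h → ℕ) (i : Fin h) : Prop := ∀ j, w j = w i → i ≤ j

/-- `Π*_{L_T,n,l}(w)`: circuits in `Π*_{L_T,n}(w)` such that for every
generating vertex `i` with matching position `j`,
`π(i−1) − π(i) = l_i · (π(j−1) − π(j))`. -/
def toepStarSigned (t n : ℕ) (w : Fin (2 * t) → ℕ) (l : Fin (2 * t) → ℤ) :
    Set (Fin (2 * t + 1) → Fin n) :=
  {π | π ∈ toepStar t n w ∧ ∀ i j : Fin (2 * t), IsGen w i → i ≠ j → w j = w i →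
    (π i.castSucc : ℤ) - (π i.succ : ℤ) = l i * ((π j.castSucc : ℤ) - (π j.succ : ℤ))}

open Finset

section Walks

variable {α β : Type*}

def firstOccurrences [DecidableEq α] (f : ℕ → α) (N : ℕ) : Finset ℕ :=
  {i ∈ range N | ∀ k < i, f k ≠ f i}

def IsPairMatchedOn [DecidableEq α] (w : ℕ → α) (N : ℕ) : Prop :=
  ∀ i < N, #{k ∈ range N | w k = w i} = 2

/-- The Wigner link condition of `Π*_{L_W}`, with the pair `(min, max)` of a step read as the
unordered edge it traverses. -/
def MatchesEdges (w : ℕ → α) (π : ℕ → β) (N : ℕ) : Prop :=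
  ∀ i < N, ∀ k < N, w i = w k → s(π i, π (i + 1)) = s(π k, π (k + 1))

def skipPair (j k : ℕ) : ℕ := if k < j then k else k + 2

lemma skipPair_injective (j : ℕ) : Function.Injective (skipPair j) := by
  intro a b h
  simp only [skipPair] at h
  split_ifs at h <;> omega

lemma skipPair_of_le {j k : ℕ} (h : j ≤ k) : skipPair j k = k + 2 := if_neg (by omega)

lemma skipPair_ne (j k : ℕ) : skipPair j k ≠ j ∧ skipPair j k ≠ j + 1 := by
  unfold skipPair; split_ifs <;> omega

lemma skipPair_lt_add_two {j k N : ℕ} (hk : k < N) : skipPair j k < N + 2 := by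
  unfold skipPair; split_ifs <;> omega

lemma image_skipPair_range {j N : ℕ} (hj : j ≤ N) :
    (range N).image (skipPair j) = {k ∈ range (N + 2) | k ≠ j ∧ k ≠ j + 1} := by
  ext k
  simp only [mem_image, mem_filter, mem_range, skipPair]
  constructor
  · rintro ⟨a, ha, rfl⟩
    split_ifs <;> omega
  · intro hk
    refine ⟨if k < j then k else k - 2, ?_, ?_⟩ <;> split_ifs <;> omega

section Backtrack

variable {π : ℕ → β} {j : ℕ}

lemma comp_skipPair_of_le (hπ : π (j + 2) = π j) {k : ℕ} (hk : k ≤ j) :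
    π (skipPair j k) = π k := by
  unfold skipPair
  split_ifs with h
  · rfl
  · rw [show k = j by omega, hπ]

lemma comp_skipPair_succ (hπ : π (j + 2) = π j) (k : ℕ) :
    π (skipPair j (k + 1)) = π (skipPair j k + 1) := by
  unfold skipPair
  split_ifs <;> first | rfl | (rw [show k + 1 = j by omega, hπ]) | omega

lemma MatchesEdges.comp_skipPair {w : ℕ → α} {N : ℕ} (he : MatchesEdges w π (N + 2))
    (hπ : π (j + 2) = π j) : MatchesEdges (w ∘ skipPair j) (π ∘ skipPair j) N := by
  intro i hi k hk hik
  simp only [Function.comp_apply, comp_skipPair_succ hπ]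
  exact he _ (skipPair_lt_add_two hi) _ (skipPair_lt_add_two hk) hik

lemma card_image_range_le_comp_skipPair [DecidableEq β] {N : ℕ} (hj : j ≤ N)
    (hπ : π (j + 2) = π j) :
    #((range (N + 2 + 1)).image π) ≤ #((range (N + 1)).image (π ∘ skipPair j)) + 1 := by
  have hsub : (range (N + 2 + 1)).image π ⊆
      insert (π (j + 1)) ((range (N + 1)).image (π ∘ skipPair j)) := by
    intro x hx
    obtain ⟨k, hk, rfl⟩ := mem_image.mp hx
    rw [mem_range] at hk
    rw [mem_insert, mem_image]
    rcases lt_trichotomy k (j + 1) with h | rfl | h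
    · exact Or.inr ⟨k, mem_range.2 (by omega), comp_skipPair_of_le hπ (by omega)⟩
    · exact Or.inl rfl
    · refine Or.inr ⟨k - 2, mem_range.2 (by omega), ?_⟩
      rw [Function.comp_apply, skipPair_of_le (by omega), Nat.sub_add_cancel (by omega)]
  exact (card_le_card hsub).trans (card_insert_le _ _)

end Backtrack

lemma catalanReducible_of_comp_skipPair {w : ℕ → ℕ} {j N : ℕ} (hj : j ≤ N)
    (hjj : w j = w (j + 1)) (h : CatalanReducible ((List.range N).map (w ∘ skipPair j))) :
    CatalanReducible ((List.range (N + 2)).map w) := by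
  obtain ⟨m, rfl⟩ := Nat.exists_eq_add_of_le hj
  have hskip : (List.range (j + m)).map (w ∘ skipPair j)
      = (List.range j).map w ++ (List.range m).map fun k => w (j + 2 + k) := by
    rw [List.range_add, List.map_append, List.map_map]
    congr 1
    · exact List.map_congr_left fun k hk => by simp [skipPair, List.mem_range.mp hk]
    · exact List.map_congr_left fun k _ => by
        simp [skipPair_of_le (Nat.le_add_right j k), add_right_comm]
  have hfull : (List.range (j + m + 2)).map w
      = (List.range j).map w ++ w j :: w j :: (List.range m).map fun k => w (j + 2 + k) := by
    rw [show j + m + 2 = j + (2 + m) by ring, List.range_add, List.range_add]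
    simp [← hjj, show List.range 2 = [0, 1] from rfl, add_assoc]
  rw [hskip] at h
  rw [hfull]
  exact h.step _ _ _

variable [DecidableEq α] {w : ℕ → α} {N : ℕ}

lemma image_firstOccurrences (f : ℕ → α) (N : ℕ) :
    (firstOccurrences f N).image f = (range N).image f := by
  refine (image_subset_image (filter_subset _ _)).antisymm ?_
  rintro _ hx
  obtain ⟨k, hk, rfl⟩ := mem_image.mp hx
  have hex : ∃ m, f m = f k := ⟨k, rfl⟩
  refine mem_image.mpr ⟨Nat.find hex, ?_, Nat.find_spec hex⟩
  simp only [mem_filter, mem_range] at hk ⊢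
  refine ⟨(Nat.find_min' hex rfl).trans_lt hk, fun m hm => ?_⟩
  rw [Nat.find_spec hex]
  exact Nat.find_min hex hm

lemma injOn_firstOccurrences (f : ℕ → α) (N : ℕ) : Set.InjOn f (firstOccurrences f N) := by
  intro i hi k hk hik
  simp only [firstOccurrences, coe_filter, Set.mem_ofPred_eq] at hi hk
  by_contra hne
  rcases Nat.lt_or_gt_of_ne hne with h | h
  exacts [hk.2 i h hik, hi.2 k h hik.symm]

lemma card_firstOccurrences (f : ℕ → α) (N : ℕ) :
    #(firstOccurrences f N) = #((range N).image f) := by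
  rw [← image_firstOccurrences, card_image_of_injOn (injOn_firstOccurrences f N)]

lemma zero_mem_firstOccurrences (f : ℕ → α) {N : ℕ} (hN : 0 < N) :
    0 ∈ firstOccurrences f N := by
  simp [firstOccurrences, hN]

lemma IsPairMatchedOn.two_mul_card_firstOccurrences (hw : IsPairMatchedOn w N) :
    2 * #(firstOccurrences w N) = N := by
  have hfib : ∀ a ∈ (range N).image w, #{k ∈ range N | w k = a} = 2 := by
    rintro _ ha
    obtain ⟨i, hi, rfl⟩ := mem_image.mp ha
    exact hw i (mem_range.mp hi)
  conv_rhs => rw [← card_range N, card_eq_sum_card_image w (range N), sum_const_nat hfib]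
  rw [card_firstOccurrences, mul_comm]

lemma IsPairMatchedOn.eq_or_eq_succ (hw : IsPairMatchedOn w N) {j k : ℕ} (hj : j + 1 < N)
    (hjj : w j = w (j + 1)) (hk : k < N) (hwk : w k = w j) : k = j ∨ k = j + 1 := by
  by_contra hne
  have hthree : 2 < #{m ∈ range N | w m = w j} := two_lt_card.mpr
    ⟨j, by simp; omega, j + 1, by simp [hjj]; omega, k, by simp [hwk]; omega,
      by omega, by omega, by omega⟩
  have := hw j (by omega)
  omega

lemma IsPairMatchedOn.comp_skipPair {j : ℕ} (hw : IsPairMatchedOn w (N + 2)) (hj : j ≤ N)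
    (hjj : w j = w (j + 1)) : IsPairMatchedOn (w ∘ skipPair j) N := by
  intro i hi
  have hlt := skipPair_lt_add_two (j := j) hi
  have hletter : w (skipPair j i) ≠ w j := fun h => by
    have := hw.eq_or_eq_succ (by omega) hjj hlt h
    have := skipPair_ne j i
    omega
  have hpair : ∀ k, w k = w (skipPair j i) → k ≠ j ∧ k ≠ j + 1 := by
    intro k hk
    constructor <;> rintro rfl
    exacts [hletter hk.symm, hletter (hk.symm.trans hjj.symm)]
  have himage := filter_image (s := range N) (f := skipPair j)
    (p := fun k => w k = w (skipPair j i))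
  rw [image_skipPair_range hj, filter_filter] at himage
  rw [← hw _ hlt, ← card_image_of_injective _ (skipPair_injective j)]
  simp only [Function.comp_apply]
  rw [← himage]
  congr 1
  exact filter_congr fun k _ => ⟨And.right, fun hk => ⟨hpair k hk, hk⟩⟩

variable {π : ℕ → β}

lemma MatchesEdges.sub_one_mem_firstOccurrences [DecidableEq β] (he : MatchesEdges w π N)
    {p : ℕ} (hp : p ∈ firstOccurrences π (N + 1)) (hp0 : 0 < p) :
    p - 1 ∈ firstOccurrences w N := by
  simp only [firstOccurrences, mem_filter, mem_range] at hp ⊢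
  refine ⟨by omega, fun q hq hwq => ?_⟩
  have hedge := he q (by omega) (p - 1) (by omega) hwq
  rw [Nat.sub_add_cancel hp0, Sym2.eq_iff] at hedge
  rcases hedge with ⟨-, h⟩ | ⟨h, -⟩
  exacts [hp.2 (q + 1) (by omega) h, hp.2 q (by omega) h]

lemma MatchesEdges.image_pred_firstOccurrences [DecidableEq β] (he : MatchesEdges w π N)
    (hcard : #(firstOccurrences w N) < #(firstOccurrences π (N + 1))) :
    ((firstOccurrences π (N + 1)).erase 0).image (· - 1) = firstOccurrences w N := by
  have hinj : Set.InjOn (· - 1) ((firstOccurrences π (N + 1)).erase 0 : Set ℕ) := by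
    intro a ha b hb hab
    have := ne_of_mem_erase ha
    have := ne_of_mem_erase hb
    simp only at hab
    omega
  refine eq_of_subset_of_card_le ?_ ?_
  · intro x hx
    obtain ⟨p, hp, rfl⟩ := mem_image.mp hx
    exact he.sub_one_mem_firstOccurrences (mem_of_mem_erase hp)
      (Nat.pos_of_ne_zero (ne_of_mem_erase hp))
  · rw [card_image_of_injOn hinj, card_erase_of_mem (zero_mem_firstOccurrences π (by omega))]
    omega

lemma MatchesEdges.exists_backtrack [DecidableEq β] (he : MatchesEdges w π N) (hN : 0 < N)
    (hclosed : π 0 = π N) (hcard : #(firstOccurrences w N) < #((range (N + 1)).image π)) :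
    ∃ j, j + 2 ≤ N ∧ w j = w (j + 1) ∧ π (j + 2) = π j := by
  rw [← card_firstOccurrences] at hcard
  have hS := he.image_pred_firstOccurrences hcard
  set S := firstOccurrences π (N + 1)
  have hne : S.Nonempty := ⟨0, zero_mem_firstOccurrences π (by omega)⟩
  -- the step leaving the last new vertex `p` repeats an earlier letter, so it retraces the
  -- step into `p`
  obtain ⟨p, hpS, hpmax⟩ : ∃ p ∈ S, ∀ s ∈ S, s ≤ p := ⟨S.max' hne, max'_mem S hne, le_max' S⟩
  have hsucc : ∀ x ∈ firstOccurrences w N, x + 1 ≤ p := by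
    intro x hx
    rw [← hS] at hx
    obtain ⟨s, hs, rfl⟩ := mem_image.mp hx
    have := hpmax s (mem_of_mem_erase hs)
    have := ne_of_mem_erase hs
    omega
  have hp0 := hsucc 0 (zero_mem_firstOccurrences w hN)
  have hpF : p ∉ firstOccurrences w N := fun h => by
    have := hsucc p h
    omega
  simp only [S, firstOccurrences, mem_filter, mem_range, not_and, not_forall, not_not]
    at hpS hpF
  have hpN : p < N := by
    refine lt_of_le_of_ne (by omega) fun h => hpS.2 0 hp0 ?_
    rw [hclosed, h]
  obtain ⟨q, hqp, hwq⟩ := hpF hpN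
  have hedge := he q (by omega) p hpN hwq
  rw [Sym2.eq_iff] at hedge
  rcases hedge with ⟨h, -⟩ | ⟨h, h'⟩
  · exact absurd h (hpS.2 q hqp)
  · obtain rfl : q + 1 = p := by
      by_contra hne
      exact hpS.2 (q + 1) (by omega) h'
    exact ⟨q, by omega, hwq, h.symm⟩

end Walks

theorem catalanReducible_of_lt_card_image {β : Type*} [DecidableEq β] {t : ℕ} {w : ℕ → ℕ}
    {π : ℕ → β} (hw : IsPairMatchedOn w (2 * t)) (hclosed : π 0 = π (2 * t))
    (he : MatchesEdges w π (2 * t)) (hcard : t < #((range (2 * t + 1)).image π)) :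
    CatalanReducible ((List.range (2 * t)).map w) := by
  induction t generalizing w π with
  | zero => simpa using CatalanReducible.nil
  | succ t ih =>
    rw [show 2 * (t + 1) = 2 * t + 2 by ring] at *
    have hletters := hw.two_mul_card_firstOccurrences
    obtain ⟨j, hj, hjj, hπ⟩ := he.exists_backtrack (by omega) hclosed (by omega)
    refine catalanReducible_of_comp_skipPair (by omega) hjj
      (ih (hw.comp_skipPair (by omega) hjj) ?_ (he.comp_skipPair hπ) ?_)
    · simp only [Function.comp_apply, comp_skipPair_of_le hπ (Nat.zero_le j),
        skipPair_of_le (show j ≤ 2 * t by omega), hclosed]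
    · have := card_image_range_le_comp_skipPair (N := 2 * t) (by omega) hπ
      omega

section FinSequences

variable {α : Type*} {N : ℕ}

def finExtend (g : Fin N → α) (d : α) (k : ℕ) : α := if h : k < N then g ⟨k, h⟩ else d

@[simp]
lemma finExtend_val (g : Fin N → α) (d : α) (i : Fin N) : finExtend g d i = g i := dif_pos i.2

lemma ofFn_eq_map_range_finExtend (g : Fin N → α) (d : α) :
    List.ofFn g = (List.range N).map (finExtend g d) :=
  List.ext_getElem (by simp) fun i hi _ => by
    simpa using (finExtend_val g d ⟨i, by simpa using hi⟩).symm

variable [DecidableEq α]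

lemma image_range_finExtend (g : Fin N → α) (d : α) :
    (range N).image (finExtend g d) = univ.image g := by
  rw [← image_fin_univ, image_image]
  congr 1
  funext i
  exact finExtend_val g d i

lemma PairMatched.isPairMatchedOn_finExtend {w : Fin N → ℕ} (hw : PairMatched w) (d : ℕ) :
    IsPairMatchedOn (finExtend w d) N := by
  intro i hi
  rw [← hw ⟨i, hi⟩, ← image_fin_univ, filter_image,
    card_image_of_injective _ Fin.val_injective]
  simp only [finExtend_val]
  rw [← finExtend_val w d ⟨i, hi⟩]

end FinSequences

lemma sym2_eq_of_min_max_eq {α : Type*} [LinearOrder α] {a b c d : α}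
    (h : (min a b, max a b) = (min c d, max c d)) : s(a, b) = s(c, d) := by
  simp only [Prod.mk.injEq, Sym2.eq_iff] at *
  rcases le_total a b with hab | hab <;> rcases le_total c d with hcd | hcd <;> simp_all

theorem catalanWord_of_lt_card_image {t n : ℕ} {w : Fin (2 * t) → ℕ} (hw : PairMatched w)
    {π : Fin (2 * t + 1) → Fin n} (hπ : π ∈ wignerStar t n w) (hcard : t < #(univ.image π)) :
    CatalanWord w := by
  obtain ⟨hclosed, hedge⟩ := hπ
  have hvert (i : Fin (2 * t)) : finExtend π (π 0) i = π i.castSucc ∧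
      finExtend π (π 0) (i + 1) = π i.succ :=
    ⟨finExtend_val π _ i.castSucc, finExtend_val π _ i.succ⟩
  rw [CatalanWord, ofFn_eq_map_range_finExtend w 0]
  refine catalanReducible_of_lt_card_image (π := finExtend π (π 0))
    (hw.isPairMatchedOn_finExtend 0) ?_ ?_ (by rwa [image_range_finExtend])
  · exact (finExtend_val π _ 0).trans (hclosed.trans (finExtend_val π _ (Fin.last _)).symm)
  · intro i hi k hk hik
    rw [(hvert ⟨i, hi⟩).1, (hvert ⟨i, hi⟩).2, (hvert ⟨k, hk⟩).1, (hvert ⟨k, hk⟩).2]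
    refine sym2_eq_of_min_max_eq (hedge _ _ ?_)
    exact (finExtend_val w 0 ⟨i, hi⟩).symm.trans (hik.trans (finExtend_val w 0 ⟨k, hk⟩))

/-- Functions with at most `t` values factor through `Fin t`. -/
theorem ncard_setOf_card_image_le {ι κ : Type*} [Fintype ι] [Nonempty ι] [Fintype κ]
    [DecidableEq κ] (t : ℕ) :
    {f : ι → κ | #(univ.image f) ≤ t}.ncard ≤ t ^ Fintype.card ι * Fintype.card κ ^ t := by
  have hsub : {f : ι → κ | #(univ.image f) ≤ t} ⊆
      Set.range fun p : (Fin t → κ) × (ι → Fin t) => p.1 ∘ p.2 := by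
    intro f hf
    obtain ⟨e⟩ : Nonempty (univ.image f ↪ Fin t) :=
      Function.Embedding.nonempty_of_card_le <| by
        rw [Fintype.card_coe, Fintype.card_fin]
        exact hf
    obtain ⟨i₀⟩ := ‹Nonempty ι›
    refine ⟨(Function.extend e Subtype.val fun _ => f i₀,
      fun i => e ⟨f i, mem_image_of_mem f (mem_univ i)⟩), ?_⟩
    funext i
    exact e.injective.extend_apply Subtype.val (fun _ => f i₀) ⟨f i, _⟩
  calc _ ≤ (Set.range fun p : (Fin t → κ) × (ι → Fin t) => p.1 ∘ p.2).ncard :=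
        Set.ncard_le_ncard hsub (Set.toFinite _)
    _ ≤ (Set.univ : Set ((Fin t → κ) × (ι → Fin t))).ncard := by
        rw [← Set.image_univ]
        exact Set.ncard_image_le (Set.toFinite _)
    _ = _ := by
        rw [Set.ncard_univ, Nat.card_prod, Nat.card_fun, Nat.card_fun, Nat.card_fin,
          Nat.card_eq_fintype_card, Nat.card_eq_fintype_card, mul_comm]

theorem tendsto_div_pow_succ_of_le_mul_pow {a : ℕ → ℝ} {C : ℝ} {t : ℕ} (ha : ∀ n, 0 ≤ a n)
    (hC : ∀ n, a n ≤ C * (n : ℝ) ^ t) :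
    Tendsto (fun n => a n / (n : ℝ) ^ (t + 1)) atTop (𝓝 0) := by
  refine squeeze_zero' (Eventually.of_forall fun n => div_nonneg (ha n) (by positivity)) ?_
    (tendsto_const_div_atTop_nhds_zero_nat C)
  filter_upwards [eventually_gt_atTop 0] with n hn
  rw [div_le_div_iff₀ (by positivity) (by positivity), pow_succ, ← mul_assoc]
  exact mul_le_mul_of_nonneg_right (hC n) (Nat.cast_nonneg n)

/-- For any pair-matched non-Catalan word `w` of length `2t`,
`#Π*_{L_W,n}(w)/n^{t+1} → 0` as `n → ∞`. -/
theorem wignerStar_nonCatalan_limit (t : ℕ) (w : Fin (2 * t) → ℕ)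
    (hw : PairMatched w) (hc : ¬ CatalanWord w) :
    Tendsto (fun n : ℕ => ((wignerStar t n w).ncard : ℝ) / (n : ℝ) ^ (t + 1))
      atTop (nhds 0) := by
  have hfew (n : ℕ) : wignerStar t n w ⊆ {π | #(univ.image π) ≤ t} := fun π hπ =>
    not_lt.mp fun hcard => hc (catalanWord_of_lt_card_image hw hπ hcard)
  refine tendsto_div_pow_succ_of_le_mul_pow (C := (t : ℝ) ^ (2 * t + 1))
    (fun n => Nat.cast_nonneg _) fun n => ?_
  have hbound := (Set.ncard_le_ncard (hfew n) (Set.toFinite _)).trans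
    (ncard_setOf_card_image_le t)
  simp only [Fintype.card_fin] at hbound
  exact_mod_cast hbound
end

section
/- For any pair-matched word w of length 2t, lim_{k→∞} #Π*_{L_T,k,l_0}(w)/k^{t+1} = lim_{k→∞} #Π*_{L_T,k}(w)/k^{t+1} = p_T(w), where l_0 = (−1,...,−1). -/
/-!
Pair the two occurrences of each letter of `w`; the first occurrences (generating positions)
are `t` in number. A circuit is determined by `π 0` and its increments `u i = π i - π (i + 1)`.
It lies in `Π*_{L_T,k,l₀}(w)` exactly when `u` is odd under the pairing, i.e. `u` is the lift
of some `d ∈ ℤ^t` prescribing the increments at generating positions; the admissible starting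
points for a given `d` then form an interval of length `k - R d`, where `R d` is the spread
(maximum minus minimum) of the partial sums of the lift. `R` is an integer norm on `ℤ^t`, and
for every such norm `N k = ∑ d, (k - R d)⁺` satisfies
`|N (k j) - j ^ (t + 1) N k| = O(j ^ (t + 1) k ^ t)` (split `d' = j d + r` with `0 ≤ r < j`),
so `N k / k ^ (t + 1)` is Cauchy and converges.

A circuit of `Π*_{L_T,k}(w)` outside the signed set has a generating position `g` whose two
increments agree. Every other increment is fixed by the increment at its generating position
up to sign, and then the closing condition `∑ i, u i = 0` fixes `u g`; so these circuits
number `O(k ^ t)` and do not affect the limit.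
-/

open Filter Topology

open Finset

lemma smul_add_injOn {ι : Type*} {j : ℤ} (hj : 0 < j) :
    Set.InjOn (fun p : (ι → ℤ) × (ι → ℤ) => j • p.1 + p.2)
      {p | ∀ i, p.2 i ∈ Ico 0 j} := by
  have hdiv (d r : ι → ℤ) (hr : ∀ i, r i ∈ Ico 0 j) (i : ι) :
      (j • d + r) i / j = d i ∧ (j • d + r) i % j = r i := by
    have := mem_Ico.1 (hr i)
    rw [Pi.add_apply, Pi.smul_apply, smul_eq_mul, add_comm, Int.add_mul_ediv_left _ _ hj.ne',
      Int.ediv_eq_zero_of_lt this.1 this.2, zero_add, Int.add_mul_emod_self_left,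
      Int.emod_eq_of_lt this.1 this.2]
    exact ⟨rfl, rfl⟩
  rintro ⟨d, r⟩ hr ⟨d', r'⟩ hr' h
  refine Prod.ext (funext fun i => ?_) (funext fun i => ?_)
  · show d i = d' i
    rw [← (hdiv d r hr i).1, ← (hdiv d' r' hr' i).1]
    exact congrArg (· i / j) h
  · show r i = r' i
    rw [← (hdiv d r hr i).2, ← (hdiv d' r' hr' i).2]
    exact congrArg (· i % j) h

lemma exists_tendsto_of_abs_map_mul_sub_le {a : ℕ → ℝ} {C : ℝ}
    (h : ∀ k j, 1 ≤ k → 1 ≤ j → |a (k * j) - a k| ≤ C / k) :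
    ∃ p, Tendsto a atTop (𝓝 p) := by
  have hC : 0 ≤ C := by simpa using h 1 1 le_rfl le_rfl
  refine cauchySeq_tendsto_of_complete (Metric.cauchySeq_iff'.2 fun ε hε => ?_)
  obtain ⟨N, hN⟩ := exists_nat_gt (2 * C / ε)
  refine ⟨N + 1, fun n hn => ?_⟩
  have hn1 : (N + 1 : ℝ) ≤ n := by exact_mod_cast hn
  have h1 := h n (N + 1) (by omega) (by omega)
  have h2 := h (N + 1) n (by omega) (by omega)
  rw [mul_comm] at h2
  push_cast at h1 h2
  have hCn : C / n ≤ C / (N + 1) := div_le_div_of_nonneg_left hC (by positivity) hn1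
  rw [div_lt_iff₀ hε] at hN
  rw [Real.dist_eq]
  calc |a n - a (N + 1)| ≤ |a (n * (N + 1)) - a n| + |a (n * (N + 1)) - a (N + 1)| := by
        rw [abs_sub_comm (a (n * (N + 1)))]; exact abs_sub_le _ _ _
    _ ≤ 2 * C / (N + 1) := by rw [mul_div_assoc, two_mul]; linarith
    _ < ε := by rw [div_lt_iff₀ (by positivity)]; linarith

lemma card_piFinset_update_singleton {ι α : Type*} [Fintype ι] [DecidableEq ι] (s : Finset α)
    (g : ι) (a : α) :
    #(Fintype.piFinset (Function.update (fun _ => s) g {a})) = #s ^ (Fintype.card ι - 1) := by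
  rw [Fintype.card_piFinset, ← prod_erase_mul _ _ (mem_univ g), Function.update_self,
    card_singleton, mul_one, prod_congr rfl fun v hv => by
      rw [Function.update_of_ne (ne_of_mem_erase hv)],
    prod_const, card_erase_of_mem (mem_univ g), card_univ]

lemma mul_two_mul_add_one_pow_pred_le {k t : ℕ} (hk : 1 ≤ k) (ht : 1 ≤ t) :
    k * ((2 * k + 1) ^ (t - 1) * 4 ^ t) ≤ 12 ^ t * k ^ t := by
  obtain ⟨s, rfl⟩ : ∃ s, t = s + 1 := ⟨t - 1, by omega⟩
  rw [Nat.add_sub_cancel]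
  calc _ ≤ k * ((3 * k) ^ s * 4 ^ (s + 1)) := by gcongr; omega
    _ = 3 ^ s * 4 ^ (s + 1) * k ^ (s + 1) := by ring
    _ ≤ 3 ^ (s + 1) * 4 ^ (s + 1) * k ^ (s + 1) := by gcongr <;> omega
    _ = 12 ^ (s + 1) * k ^ (s + 1) := by rw [← mul_pow]; norm_num

structure LatticeNorm (ι : Type*) where
  toFun : (ι → ℤ) → ℤ
  map_add_le : ∀ d e, toFun (d + e) ≤ toFun d + toFun e
  map_smul : ∀ (c : ℤ) d, toFun (c • d) = |c| * toFun d
  abs_apply_le : ∀ d i, |d i| ≤ toFun d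

namespace LatticeNorm

variable {ι : Type*} (R : LatticeNorm ι)

instance : CoeFun (LatticeNorm ι) fun _ => (ι → ℤ) → ℤ := ⟨toFun⟩

lemma map_zero : R 0 = 0 := by
  simpa using R.map_smul 0 0

lemma map_neg (d : ι → ℤ) : R (-d) = R d := by
  simpa using R.map_smul (-1) d

lemma nonneg (d : ι → ℤ) : 0 ≤ R d := by
  have := R.map_add_le d (-d)
  rw [add_neg_cancel, map_zero, map_neg] at this
  linarith

lemma abs_map_add_sub_le (d e : ι → ℤ) : |R (d + e) - R d| ≤ R e := by
  have h := R.map_add_le (d + e) (-e)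
  rw [add_neg_cancel_right, map_neg] at h
  rw [abs_le]
  constructor <;> linarith [R.map_add_le d e]

variable [Fintype ι] [DecidableEq ι]

def normBound : ℤ := ∑ i, R (Pi.single i 1)

lemma normBound_nonneg : 0 ≤ R.normBound :=
  sum_nonneg fun _ _ => R.nonneg _

lemma le_normBound_mul {d : ι → ℤ} {c : ℤ} (hd : ∀ i, |d i| ≤ c) :
    R d ≤ R.normBound * c := by
  calc R d = R (∑ i, d i • Pi.single i 1) := by
        simp_rw [← Pi.single_smul', smul_eq_mul, mul_one, univ_sum_single]
    _ ≤ ∑ i, R (d i • Pi.single i 1) :=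
        le_sum_of_subadditive R R.map_zero.le R.map_add_le _ _
    _ ≤ ∑ i, c * R (Pi.single i 1) := by
        gcongr with i
        rw [R.map_smul]
        exact mul_le_mul_of_nonneg_right (hd i) (R.nonneg _)
    _ = R.normBound * c := by rw [normBound, sum_mul]; simp_rw [mul_comm]

noncomputable def box (a : ℤ) : Finset (ι → ℤ) := Fintype.piFinset fun _ => Icc (-a) a

lemma mem_box_of_lt {d : ι → ℤ} {a : ℤ} (h : R d < a) : d ∈ box a :=
  Fintype.mem_piFinset.2 fun i => mem_Icc.2 (abs_le.1 ((R.abs_apply_le d i).trans h.le))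

lemma card_box {a : ℤ} (ha : 0 ≤ a) :
    (#(box a : Finset (ι → ℤ)) : ℤ) = (2 * a + 1) ^ Fintype.card ι := by
  rw [box, Fintype.card_piFinset, prod_const, Int.card_Icc, card_univ]
  push_cast
  rw [Int.toNat_of_nonneg (by omega)]
  ring_nf

noncomputable def count (k : ℕ) : ℤ := ∑ d ∈ box k, max ((k : ℤ) - R d) 0

lemma count_eq_sum_of_subset {k : ℕ} {B : Finset (ι → ℤ)} (hB : ∀ d, R d < k → d ∈ B) :
    R.count k = ∑ d ∈ B, max ((k : ℤ) - R d) 0 := by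
  have hsupp : ∀ d, max ((k : ℤ) - R d) 0 ≠ 0 ↔ R d < k := fun d => by
    rw [ne_eq, max_eq_right_iff, not_le, sub_pos]
  rw [count, ← sum_filter_ne_zero, ← sum_filter_ne_zero (s := B)]
  congr 1
  ext d
  simp only [mem_filter, hsupp]
  exact ⟨fun h => ⟨hB d h.2, h.2⟩, fun h => ⟨R.mem_box_of_lt h.2, h.2⟩⟩

noncomputable def residues (j : ℤ) : Finset (ι → ℤ) := Fintype.piFinset fun _ => Ico 0 j

lemma card_residues {j : ℤ} (hj : 0 ≤ j) :
    (#(residues j : Finset (ι → ℤ)) : ℤ) = j ^ Fintype.card ι := by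
  rw [residues, Fintype.card_piFinset, prod_const, Int.card_Ico, card_univ, sub_zero]
  push_cast
  rw [Int.toNat_of_nonneg hj]

lemma count_mul_eq_sum {k j : ℕ} (hj : 0 < j) :
    R.count (k * j) = ∑ p ∈ box (k + R.normBound) ×ˢ residues j,
      max ((k * j : ℤ) - R ((j : ℤ) • p.1 + p.2)) 0 := by
  have hjz : (0 : ℤ) < j := by exact_mod_cast hj
  rw [R.count_eq_sum_of_subset (B := (box (k + R.normBound) ×ˢ residues j).image
      fun p : (ι → ℤ) × (ι → ℤ) => (j : ℤ) • p.1 + p.2),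
    sum_image ((smul_add_injOn hjz).mono fun p hp => Fintype.mem_piFinset.1 (mem_product.1 hp).2)]
  · push_cast; rfl
  intro d' hd'
  set q : ι → ℤ := fun i => d' i / j
  set r : ι → ℤ := fun i => d' i % j
  have hdecomp : (j : ℤ) • q + r = d' := funext fun i => Int.mul_ediv_add_emod (d' i) j
  have hr : ∀ i, r i ∈ Ico 0 (j : ℤ) := fun i =>
    mem_Ico.2 ⟨Int.emod_nonneg _ hjz.ne', Int.emod_lt_of_pos _ hjz⟩
  have hRr : R r ≤ R.normBound * j := R.le_normBound_mul fun i => by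
    have := mem_Ico.1 (hr i); rw [abs_le]; omega
  have hRq : (j : ℤ) * R q < j * (k + R.normBound) := by
    have h := R.map_add_le d' (-r)
    rw [← hdecomp, add_neg_cancel_right, R.map_smul, map_neg, abs_of_pos hjz, hdecomp] at h
    push_cast at hd'
    nlinarith
  refine mem_image.2 ⟨(q, r), mem_product.2 ⟨R.mem_box_of_lt ?_, Fintype.mem_piFinset.2 hr⟩,
    hdecomp⟩
  exact lt_of_mul_lt_mul_left hRq hjz.le

lemma count_mul_sub_eq_sum {k j : ℕ} (hj : 0 < j) :
    R.count (k * j) - (j : ℤ) ^ (Fintype.card ι + 1) * R.count k =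
      ∑ p ∈ box (k + R.normBound) ×ˢ residues j,
        (max ((k * j : ℤ) - R ((j : ℤ) • p.1 + p.2)) 0 -
          max ((k * j : ℤ) - R ((j : ℤ) • p.1)) 0) := by
  have hjz : (0 : ℤ) < j := by exact_mod_cast hj
  have hscale (d : ι → ℤ) :
      (j : ℤ) * max ((k : ℤ) - R d) 0 = max ((k * j : ℤ) - R ((j : ℤ) • d)) 0 := by 
    rw [R.map_smul, abs_of_pos hjz, mul_max_of_nonneg _ _ hjz.le]
    ring_nf
  have hk : R.count k = ∑ d ∈ box (k + R.normBound), max ((k : ℤ) - R d) 0 :=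
    R.count_eq_sum_of_subset fun d hd => R.mem_box_of_lt (by linarith [R.normBound_nonneg])
  rw [sum_sub_distrib, ← count_mul_eq_sum R hj, hk, sum_product, mul_sum]
  congr 1
  refine sum_congr rfl fun d _ => ?_
  dsimp only
  rw [sum_const, nsmul_eq_mul, card_residues hjz.le, ← hscale, pow_succ]
  ring

theorem abs_count_mul_sub_le {k j : ℕ} (hk : 1 ≤ k) (hj : 1 ≤ j) :
    |R.count (k * j) - (j : ℤ) ^ (Fintype.card ι + 1) * R.count k| ≤
      R.normBound * (2 * R.normBound + 3) ^ Fintype.card ι * j ^ (Fintype.card ι + 1) *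
        k ^ Fintype.card ι := by
  set M := R.normBound
  have hM := R.normBound_nonneg
  have hjz : (0 : ℤ) < j := by exact_mod_cast hj
  have hkz : (1 : ℤ) ≤ k := by exact_mod_cast hk
  have hterm : ∀ p ∈ box (k + M) ×ˢ residues j,
      |max ((k * j : ℤ) - R ((j : ℤ) • p.1 + p.2)) 0 -
        max ((k * j : ℤ) - R ((j : ℤ) • p.1)) 0| ≤ M * j := by
    intro p hp
    have hr := Fintype.mem_piFinset.1 (mem_product.1 hp).2
    calc _ ≤ |((k * j : ℤ) - R ((j : ℤ) • p.1 + p.2)) -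
          ((k * j : ℤ) - R ((j : ℤ) • p.1))| :=
          abs_max_sub_max_le_abs _ _ _
      _ = |R ((j : ℤ) • p.1 + p.2) - R ((j : ℤ) • p.1)| := by
          rw [sub_sub_sub_cancel_left, abs_sub_comm]
      _ ≤ R p.2 := R.abs_map_add_sub_le _ _
      _ ≤ M * j := R.le_normBound_mul fun i => by
          have := mem_Ico.1 (hr i); rw [abs_le]; omega
  have hcard : (#(box (k + M) ×ˢ residues j : Finset ((ι → ℤ) × (ι → ℤ))) : ℤ) ≤
      ((2 * M + 3) * k) ^ Fintype.card ι * j ^ Fintype.card ι := by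
    rw [card_product, Nat.cast_mul, card_box (by omega), card_residues hjz.le]
    gcongr
    nlinarith
  rw [count_mul_sub_eq_sum R hj]
  calc _ ≤ ∑ p ∈ box (k + M) ×ˢ residues j,
        |max ((k * j : ℤ) - R ((j : ℤ) • p.1 + p.2)) 0 -
          max ((k * j : ℤ) - R ((j : ℤ) • p.1)) 0| :=
        abs_sum_le_sum_abs _ _
    _ ≤ ∑ _p ∈ box (k + M) ×ˢ residues j, M * j := sum_le_sum hterm
    _ ≤ ((2 * M + 3) * k) ^ Fintype.card ι * j ^ Fintype.card ι * (M * j) := by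
        rw [sum_const, nsmul_eq_mul]
        exact mul_le_mul_of_nonneg_right hcard (by positivity)
    _ = _ := by rw [mul_pow]; ring

theorem exists_tendsto_count :
    ∃ p : ℝ, Tendsto (fun k : ℕ => (R.count k : ℝ) / (k : ℝ) ^ (Fintype.card ι + 1))
      atTop (𝓝 p) := by
  set n := Fintype.card ι
  set C : ℤ := R.normBound * (2 * R.normBound + 3) ^ n
  refine exists_tendsto_of_abs_map_mul_sub_le (C := C) fun k j hk hj => ?_
  have hkR : (0 : ℝ) < k := by exact_mod_cast hk
  have hjR : (0 : ℝ) < j := by exact_mod_cast hj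
  have hkj : |(R.count (k * j) : ℝ) - (j : ℝ) ^ (n + 1) * R.count k| ≤
      C * (j : ℝ) ^ (n + 1) * (k : ℝ) ^ n := by
    exact_mod_cast R.abs_count_mul_sub_le hk hj
  calc _ = |(R.count (k * j) : ℝ) - (j : ℝ) ^ (n + 1) * R.count k| /
        ((k : ℝ) ^ (n + 1) * (j : ℝ) ^ (n + 1)) := by
        rw [← abs_of_pos (by positivity : (0 : ℝ) < (k : ℝ) ^ (n + 1) * (j : ℝ) ^ (n + 1)),
          ← abs_div]
        congr 1
        push_cast
        field_simp
        ring
    _ ≤ C * (j : ℝ) ^ (n + 1) * (k : ℝ) ^ n / ((k : ℝ) ^ (n + 1) * (j : ℝ) ^ (n + 1)) :=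
        by gcongr
    _ = C / k := by
        field_simp
        ring

end LatticeNorm

section Increments

variable {n k : ℕ}

def increment (π : Fin (n + 1) → Fin k) (i : Fin n) : ℤ :=
  (π i.castSucc : ℤ) - (π i.succ : ℤ)

def partialSum (u : Fin n → ℤ) (m : ℕ) : ℤ :=
  ∑ i ∈ univ.filter fun i : Fin n => (i : ℕ) < m, u i

lemma partialSum_zero (u : Fin n → ℤ) : partialSum u 0 = 0 :=
  sum_eq_zero fun _ hi => absurd (mem_filter.1 hi).2 (Nat.not_lt_zero _)

lemma partialSum_succ (u : Fin n → ℤ) (i : Fin n) :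
    partialSum u (i + 1) = partialSum u i + u i := by
  have : (univ.filter fun j : Fin n => (j : ℕ) < i + 1) =
      insert i (univ.filter fun j : Fin n => (j : ℕ) < i) := by
    ext j
    simp only [mem_filter, mem_univ, true_and, mem_insert, Fin.ext_iff]
    omega
  rw [partialSum, this, sum_insert (by simp), add_comm]
  rfl

lemma partialSum_of_le (u : Fin n → ℤ) {m : ℕ} (hm : n ≤ m) :
    partialSum u m = ∑ i, u i := by
  rw [partialSum, filter_true_of_mem fun i _ => i.2.trans_le hm]

lemma partialSum_add (u v : Fin n → ℤ) (m : ℕ) :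
    partialSum (u + v) m = partialSum u m + partialSum v m :=
  sum_add_distrib

lemma partialSum_smul (c : ℤ) (u : Fin n → ℤ) (m : ℕ) :
    partialSum (c • u) m = c * partialSum u m := by
  simp only [partialSum, Pi.smul_apply, smul_eq_mul, mul_sum]

lemma sub_apply_eq_partialSum_increment (π : Fin (n + 1) → Fin k) (m : Fin (n + 1)) :
    (π 0 : ℤ) - π m = partialSum (increment π) m := by
  induction m using Fin.induction with
  | zero => simp [partialSum_zero]
  | succ i ih =>
    rw [Fin.val_castSucc] at ih
    rw [Fin.val_succ, partialSum_succ, ← ih, increment]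
    ring

lemma eq_of_increment_eq {π ρ : Fin (n + 1) → Fin k} (h0 : π 0 = ρ 0)
    (h : increment π = increment ρ) : π = ρ := by
  funext m
  have hπ := sub_apply_eq_partialSum_increment π m
  rw [h, ← sub_apply_eq_partialSum_increment, h0] at hπ
  exact Fin.ext (by omega)

lemma apply_zero_eq_last_iff (π : Fin (n + 1) → Fin k) :
    π 0 = π (Fin.last n) ↔ ∑ i, increment π i = 0 := by
  have h := sub_apply_eq_partialSum_increment π (Fin.last n)
  rw [Fin.val_last, partialSum_of_le _ le_rfl] at h
  rw [← h, sub_eq_zero, Fin.ext_iff, Nat.cast_inj]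

lemma exists_increment_eq (u : Fin n → ℤ) {x : ℤ}
    (hx : ∀ m ≤ n, 0 ≤ x - partialSum u m ∧ x - partialSum u m < k) :
    ∃ π : Fin (n + 1) → Fin k, (π 0 : ℤ) = x ∧ increment π = u := by
  have hπ (m : Fin (n + 1)) := hx m (Nat.lt_succ_iff.1 m.2)
  refine ⟨fun m => ⟨(x - partialSum u m).toNat, by have := hπ m; omega⟩, ?_, ?_⟩
  · have h0 := (hx 0 n.zero_le).1
    rw [partialSum_zero, sub_zero] at h0
    simp [partialSum_zero, h0]
  · funext i
    have h1 := (hπ i.castSucc).1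
    have h2 := (hπ i.succ).1
    rw [Fin.val_castSucc] at h1
    rw [Fin.val_succ, partialSum_succ] at h2
    simp only [increment, Fin.val_succ, Fin.val_castSucc, partialSum_succ,
      Int.toNat_of_nonneg h1, Int.toNat_of_nonneg h2]
    ring

noncomputable def maxPartialSum (u : Fin n → ℤ) : ℤ :=
  (range (n + 1)).sup' nonempty_range_add_one (partialSum u)

noncomputable def minPartialSum (u : Fin n → ℤ) : ℤ :=
  (range (n + 1)).inf' nonempty_range_add_one (partialSum u)

noncomputable def spread (u : Fin n → ℤ) : ℤ := maxPartialSum u - minPartialSum u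

lemma partialSum_le_maxPartialSum (u : Fin n → ℤ) {m : ℕ} (hm : m ≤ n) :
    partialSum u m ≤ maxPartialSum u :=
  le_sup' _ (mem_range_succ_iff.2 hm)

lemma minPartialSum_le_partialSum (u : Fin n → ℤ) {m : ℕ} (hm : m ≤ n) :
    minPartialSum u ≤ partialSum u m :=
  inf'_le _ (mem_range_succ_iff.2 hm)

lemma mem_Icc_iff_forall_partialSum (u : Fin n → ℤ) (x : ℤ) :
    x ∈ Icc (maxPartialSum u) (minPartialSum u + k - 1) ↔
      ∀ m ≤ n, 0 ≤ x - partialSum u m ∧ x - partialSum u m < k := by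
  rw [mem_Icc, show x ≤ minPartialSum u + k - 1 ↔ x - k + 1 ≤ minPartialSum u by omega,
    maxPartialSum, minPartialSum, sup'_le_iff, le_inf'_iff]
  simp only [mem_range_succ_iff]
  exact ⟨fun h m hm => by have := h.1 m hm; have := h.2 m hm; omega,
    fun h => ⟨fun m hm => by have := h m hm; omega, fun m hm => by have := h m hm; omega⟩⟩

lemma card_Icc_maxPartialSum (u : Fin n → ℤ) (k : ℕ) :
    (#(Icc (maxPartialSum u) (minPartialSum u + k - 1)) : ℤ) = max ((k : ℤ) - spread u) 0 := by
  rw [Int.card_Icc, Int.toNat_eq_max, spread]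
  ring_nf

lemma sub_le_spread (u : Fin n → ℤ) {a b : ℕ} (ha : a ≤ n) (hb : b ≤ n) :
    partialSum u a - partialSum u b ≤ spread u :=
  sub_le_sub (partialSum_le_maxPartialSum u ha) (minPartialSum_le_partialSum u hb)

lemma abs_sub_le_spread (u : Fin n → ℤ) {a b : ℕ} (ha : a ≤ n) (hb : b ≤ n) :
    |partialSum u a - partialSum u b| ≤ spread u :=
  abs_sub_le_iff.2 ⟨sub_le_spread u ha hb, sub_le_spread u hb ha⟩

lemma spread_nonneg (u : Fin n → ℤ) : 0 ≤ spread u := by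
  simpa using sub_le_spread u (a := 0) (b := 0) n.zero_le n.zero_le

lemma exists_spread_eq (u : Fin n → ℤ) :
    ∃ a ≤ n, ∃ b ≤ n, spread u = partialSum u a - partialSum u b := by
  obtain ⟨a, ha, hmax⟩ := exists_mem_eq_sup' nonempty_range_add_one (partialSum u)
  obtain ⟨b, hb, hmin⟩ := exists_mem_eq_inf' nonempty_range_add_one (partialSum u)
  exact ⟨a, mem_range_succ_iff.1 ha, b, mem_range_succ_iff.1 hb, by
    rw [spread, maxPartialSum, minPartialSum, hmax, hmin]⟩

lemma spread_le {u : Fin n → ℤ} {s : ℤ}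
    (h : ∀ a ≤ n, ∀ b ≤ n, partialSum u a - partialSum u b ≤ s) : spread u ≤ s := by
  obtain ⟨a, ha, b, hb, hab⟩ := exists_spread_eq u
  exact hab ▸ h a ha b hb

lemma spread_add_le (u v : Fin n → ℤ) : spread (u + v) ≤ spread u + spread v :=
  spread_le fun a ha b hb => by
    simp only [partialSum_add]
    linarith [sub_le_spread u ha hb, sub_le_spread v ha hb]

lemma spread_smul (c : ℤ) (u : Fin n → ℤ) : spread (c • u) = |c| * spread u := by
  refine le_antisymm (spread_le fun a ha b hb => ?_) ?_
  · rw [partialSum_smul, partialSum_smul, ← mul_sub]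
    calc _ ≤ |c * (partialSum u a - partialSum u b)| := le_abs_self _
      _ ≤ |c| * spread u := by
        rw [abs_mul]; exact mul_le_mul_of_nonneg_left (abs_sub_le_spread u ha hb) (abs_nonneg c)
  · have hle (a : ℕ) (ha : a ≤ n) (b : ℕ) (hb : b ≤ n) :
        c * (partialSum u a - partialSum u b) ≤ spread (c • u) := by
      simpa only [partialSum_smul, mul_sub] using sub_le_spread (c • u) ha hb
    obtain ⟨a, ha, b, hb, hab⟩ := exists_spread_eq u
    have h0 : 0 ≤ partialSum u a - partialSum u b := hab ▸ spread_nonneg u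
    rw [hab, ← abs_of_nonneg h0, ← abs_mul, abs_le', ← mul_neg, neg_sub]
    exact ⟨hle a ha b hb, hle b hb a ha⟩

lemma abs_le_spread (u : Fin n → ℤ) (i : Fin n) : |u i| ≤ spread u := by
  have h := abs_sub_le_spread u (a := i + 1) (b := i) i.2 i.2.le
  rwa [partialSum_succ, add_sub_cancel_left] at h

lemma spread_lt_of_forall {u : Fin n → ℤ} {x : ℤ}
    (hx : ∀ m ≤ n, 0 ≤ x - partialSum u m ∧ x - partialSum u m < k) : spread u < k := by
  have : spread u ≤ k - 1 := spread_le fun a ha b hb => by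
    have := hx a ha; have := hx b hb; omega
  omega

end Increments

namespace PairMatched

variable {t : ℕ} {w : Fin (2 * t) → ℕ} (hw : PairMatched w)
include hw

lemma card_erase_filter (i : Fin (2 * t)) : #((univ.filter fun j => w j = w i).erase i) = 1 := by
  rw [card_erase_of_mem (by simp), hw i]

noncomputable def partner (i : Fin (2 * t)) : Fin (2 * t) :=
  ((univ.filter fun j => w j = w i).erase i).min'
    (card_pos.1 (by rw [hw.card_erase_filter i]; omega))

lemma erase_filter_eq_singleton (i : Fin (2 * t)) :
    (univ.filter fun j => w j = w i).erase i = {hw.partner i} := by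
  obtain ⟨a, ha⟩ := card_eq_one.1 (hw.card_erase_filter i)
  have h : hw.partner i ∈ (univ.filter fun j => w j = w i).erase i := min'_mem _ _
  rw [ha, mem_singleton] at h
  rw [ha, h]

lemma eq_partner_iff {i j : Fin (2 * t)} : j = hw.partner i ↔ j ≠ i ∧ w j = w i := by
  rw [← mem_singleton, ← hw.erase_filter_eq_singleton i]
  simp

lemma partner_ne (i : Fin (2 * t)) : hw.partner i ≠ i := (hw.eq_partner_iff.1 rfl).1

lemma w_partner (i : Fin (2 * t)) : w (hw.partner i) = w i := (hw.eq_partner_iff.1 rfl).2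

lemma partner_partner (i : Fin (2 * t)) : hw.partner (hw.partner i) = i :=
  (hw.eq_partner_iff.2 ⟨(hw.partner_ne i).symm, (hw.w_partner i).symm⟩).symm

lemma eq_or_eq_partner {i j : Fin (2 * t)} (h : w j = w i) : j = i ∨ j = hw.partner i := by
  rw [hw.eq_partner_iff]
  tauto

lemma not_lt_partner_iff {i : Fin (2 * t)} : ¬i < hw.partner i ↔ hw.partner i < i := by
  have := hw.partner_ne i
  omega

lemma partner_lt_partner_partner {i : Fin (2 * t)} (h : ¬i < hw.partner i) :
    hw.partner i < hw.partner (hw.partner i) := by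
  rw [hw.partner_partner]
  exact hw.not_lt_partner_iff.1 h

lemma isGen_iff (i : Fin (2 * t)) : IsGen w i ↔ i < hw.partner i := by
  refine ⟨fun h => lt_of_le_of_ne (h _ (hw.w_partner i)) (hw.partner_ne i).symm,
    fun h j hj => ?_⟩
  rcases hw.eq_or_eq_partner hj with rfl | rfl
  exacts [le_rfl, h.le]

abbrev Gen : Type := {i : Fin (2 * t) // i < hw.partner i}

lemma partner_involutive : Function.Involutive hw.partner := hw.partner_partner

lemma card_gen : Fintype.card hw.Gen = t := by
  have hswap : Fintype.card {i // i < hw.partner i} = Fintype.card {i // ¬i < hw.partner i} :=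
    Fintype.card_congr <| hw.partner_involutive.toPerm.subtypeEquiv fun i => by
      rw [Function.Involutive.coe_toPerm, hw.partner_partner, ← hw.not_lt_partner_iff, not_not]
  have hsum := card_filter_add_card_filter_not (s := univ) fun i => i < hw.partner i
  simp only [Fintype.card_subtype, card_univ, Fintype.card_fin] at hswap hsum ⊢
  omega

noncomputable def gen (i : Fin (2 * t)) : hw.Gen :=
  if h : i < hw.partner i then ⟨i, h⟩
  else ⟨hw.partner i, hw.partner_lt_partner_partner h⟩

lemma gen_coe (v : hw.Gen) : hw.gen v = v := dif_pos v.2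

lemma gen_partner (i : Fin (2 * t)) : hw.gen (hw.partner i) = hw.gen i := by
  by_cases h : i < hw.partner i
  · simp only [gen, dif_pos h, hw.partner_partner, dif_neg (lt_asymm h)]
  · simp only [gen, dif_pos (hw.partner_lt_partner_partner h), dif_neg h]

lemma eq_or_eq_partner_of_gen_eq {i : Fin (2 * t)} {v : hw.Gen} (h : hw.gen i = v) :
    i = v ∨ i = hw.partner v := by
  subst h
  unfold gen
  split_ifs
  · exact .inl rfl
  · exact .inr (hw.partner_partner i).symm

lemma w_gen (i : Fin (2 * t)) : w (hw.gen i) = w i := by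
  unfold gen
  split_ifs
  exacts [rfl, hw.w_partner i]

noncomputable def lift (d : hw.Gen → ℤ) (i : Fin (2 * t)) : ℤ :=
  if i < hw.partner i then d (hw.gen i) else -d (hw.gen i)

lemma lift_coe (d : hw.Gen → ℤ) (v : hw.Gen) : hw.lift d v = d v := by
  rw [lift, if_pos v.2, gen_coe]

lemma lift_partner (d : hw.Gen → ℤ) (i : Fin (2 * t)) :
    hw.lift d (hw.partner i) = -hw.lift d i := by
  have := hw.partner_ne i
  unfold lift
  rw [hw.gen_partner, hw.partner_partner]
  split_ifs <;> omega

lemma lift_add (d e : hw.Gen → ℤ) : hw.lift (d + e) = hw.lift d + hw.lift e := by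
  funext i
  simp only [lift, Pi.add_apply]
  split_ifs <;> ring

lemma lift_smul (c : ℤ) (d : hw.Gen → ℤ) : hw.lift (c • d) = c • hw.lift d := by
  funext i
  simp only [lift, Pi.smul_apply, smul_eq_mul]
  split_ifs <;> ring

lemma lift_restrict {u : Fin (2 * t) → ℤ} (hu : ∀ i, u (hw.partner i) = -u i) :
    hw.lift (fun v => u v) = u := by
  funext i
  by_cases hi : i < hw.partner i
  · simp only [lift, gen, if_pos hi, dif_pos hi]
  · simp only [lift, gen, if_neg hi, dif_neg hi, hu, neg_neg]

noncomputable def spreadNorm : LatticeNorm hw.Gen where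
  toFun d := spread (hw.lift d)
  map_add_le d e := by simpa only [lift_add] using spread_add_le _ _
  map_smul c d := by simp only [lift_smul, spread_smul]
  abs_apply_le d v := hw.lift_coe d v ▸ abs_le_spread _ _

lemma mem_toepStarSigned_iff {k : ℕ} (π : Fin (2 * t + 1) → Fin k) :
    π ∈ toepStarSigned t k w (fun _ => -1) ↔
      ∀ i, increment π (hw.partner i) = -increment π i := by
  constructor
  · rintro ⟨-, hsigned⟩ i
    by_cases hi : i < hw.partner i
    · have := hsigned i (hw.partner i) ((hw.isGen_iff i).2 hi) (hw.partner_ne i).symm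
        (hw.w_partner i)
      simp only [increment] at this ⊢
      linarith
    · have := hsigned (hw.partner i) i ((hw.isGen_iff _).2 (hw.partner_lt_partner_partner hi))
        (hw.partner_ne i) (hw.w_partner i).symm
      simpa only [increment, neg_one_mul] using this
  · intro h
    have hsum : ∑ i, increment π i = 0 :=
      sum_ninvolution hw.partner (fun i => by rw [h, add_neg_cancel])
        (fun i _ => hw.partner_ne i) (fun _ => mem_univ _) hw.partner_partner
    refine ⟨⟨(apply_zero_eq_last_iff π).2 hsum, fun i j hij => ?_⟩,
      fun i j _ hne hji => ?_⟩
    · change (increment π i).natAbs = (increment π j).natAbs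
      rcases hw.eq_or_eq_partner hij.symm with rfl | rfl
      · rfl
      · rw [h, Int.natAbs_neg]
    · change increment π i = -1 * increment π j
      rw [hw.eq_partner_iff.2 ⟨hne.symm, hji⟩, h]
      ring

theorem ncard_toepStarSigned (k : ℕ) :
    ((toepStarSigned t k w (fun _ => -1)).ncard : ℤ) = hw.spreadNorm.count k := by
  set S := toepStarSigned t k w (fun _ => -1)
  let code : (Fin (2 * t + 1) → Fin k) → (_ : hw.Gen → ℤ) × ℤ :=
    fun π => ⟨fun v => increment π v, π 0⟩
  have hlift : ∀ π ∈ S, hw.lift (code π).1 = increment π := fun π hπ =>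
    hw.lift_restrict ((hw.mem_toepStarSigned_iff π).1 hπ)
  have hinj : Set.InjOn code S := fun π hπ ρ hρ h => by
    rw [Sigma.mk.injEq] at h
    refine eq_of_increment_eq (Fin.ext (by exact_mod_cast heq_iff_eq.1 h.2)) ?_
    rw [← hlift π hπ, ← hlift ρ hρ]
    exact congrArg hw.lift h.1
  have himage : code '' S = ↑((LatticeNorm.box k).sigma fun d =>
      Icc (maxPartialSum (hw.lift d)) (minPartialSum (hw.lift d) + k - 1)) := by
    ext ⟨d, x⟩
    rw [coe_sigma, Set.mem_sigma_iff, mem_coe, mem_coe, mem_Icc_iff_forall_partialSum]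
    constructor
    · rintro ⟨π, hπ, hcode⟩
      cases hcode
      have hx : ∀ m ≤ 2 * t, 0 ≤ (π 0 : ℤ) - partialSum (hw.lift (code π).1) m ∧
          (π 0 : ℤ) - partialSum (hw.lift (code π).1) m < k := fun m hm => by
        have h := sub_apply_eq_partialSum_increment π ⟨m, by omega⟩
        have := (π ⟨m, by omega⟩).2
        simp only at h
        rw [hlift π hπ]
        omega
      exact ⟨hw.spreadNorm.mem_box_of_lt (spread_lt_of_forall hx), hx⟩
    · rintro ⟨-, hx⟩
      obtain ⟨π, hπ0, hπ⟩ := exists_increment_eq _ hx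
      refine ⟨π, (hw.mem_toepStarSigned_iff π).2 fun i => by rw [hπ, lift_partner], ?_⟩
      simp only [code, hπ, hπ0, lift_coe]
  rw [← hinj.ncard_image, himage, Set.ncard_coe_finset, card_sigma, Nat.cast_sum]
  exact sum_congr rfl fun d _ => card_Icc_maxPartialSum _ _

def toepStarRepeat (k : ℕ) (g : hw.Gen) : Set (Fin (2 * t + 1) → Fin k) :=
  {π | π ∈ toepStar t k w ∧ increment π (hw.partner g) = increment π g}

lemma toepStar_diff_subset (k : ℕ) :
    toepStar t k w \ toepStarSigned t k w (fun _ => -1) ⊆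
      ⋃ g, hw.toepStarRepeat k g := by
  rintro π ⟨hstar, hsigned⟩
  rw [hw.mem_toepStarSigned_iff] at hsigned
  obtain ⟨i, hi⟩ := not_forall.1 hsigned
  have hrep : increment π (hw.partner i) = increment π i := by
    have : (increment π i).natAbs = (increment π (hw.partner i)).natAbs :=
      hstar.2 i _ (hw.w_partner i).symm
    omega
  refine Set.mem_iUnion.2 ⟨hw.gen i, hstar, ?_⟩
  rcases hw.eq_or_eq_partner_of_gen_eq (rfl : hw.gen i = hw.gen i) with h | h
  · rw [← h, hrep]
  · have hp := congrArg hw.partner h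
    rw [hw.partner_partner] at hp
    rw [← hp, hw.partner_partner, hrep]

lemma eq_of_increment_partner_eq {k : ℕ} {g : hw.Gen} {π ρ : Fin (2 * t + 1) → Fin k}
    (hπ : π ∈ hw.toepStarRepeat k g) (hρ : ρ ∈ hw.toepStarRepeat k g) (h0 : π 0 = ρ 0)
    (hgen : ∀ v ≠ g, increment π v = increment ρ v)
    (hsign : ∀ i, 0 ≤ increment π i ↔ 0 ≤ increment ρ i) : π = ρ := by
  set rest := (univ.erase (g : Fin (2 * t))).erase (hw.partner g)
  have habs : ∀ σ ∈ hw.toepStarRepeat k g, ∀ i,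
      (increment σ i).natAbs = (increment σ (hw.gen i)).natAbs :=
    fun σ hσ i => hσ.1.2 i _ (hw.w_gen i).symm
  have hoff : ∀ i, hw.gen i ≠ g → increment π i = increment ρ i := fun i hi => by
    have := habs π hπ i; have := habs ρ hρ i; have := hgen _ hi; have := hsign i
    omega
  have hsplit : ∀ σ ∈ hw.toepStarRepeat k g,
      2 * increment σ g + ∑ i ∈ rest, increment σ i = 0 := fun σ ⟨hσ, hσg⟩ => by
    have := (apply_zero_eq_last_iff σ).1 hσ.1
    rwa [← add_sum_erase _ _ (mem_univ (g : Fin (2 * t))), ← add_sum_erase _ _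
      (mem_erase.2 ⟨hw.partner_ne g, mem_univ _⟩), hσg, ← add_assoc, ← two_mul] at this
  have hrest : ∑ i ∈ rest, increment π i = ∑ i ∈ rest, increment ρ i :=
    sum_congr rfl fun i hi => hoff i fun hig => by
      rcases hw.eq_or_eq_partner_of_gen_eq hig with rfl | rfl <;> simp [rest] at hi
  have hg : increment π g = increment ρ g := by
    linarith [hsplit π hπ, hsplit ρ hρ]
  refine eq_of_increment_eq h0 (funext fun i => ?_)
  by_cases hi : hw.gen i = g
  · rcases hw.eq_or_eq_partner_of_gen_eq hi with rfl | rfl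
    exacts [hg, by rw [hπ.2, hρ.2, hg]]
  · exact hoff i hi

lemma ncard_toepStarRepeat_le (g : hw.Gen) {k : ℕ} (hk : 1 ≤ k) :
    (hw.toepStarRepeat k g).ncard ≤ 12 ^ t * k ^ t := by
  -- Forgetting the increment at `g` saves a factor `k`; the closing condition recovers it.
  let code (π : Fin (2 * t + 1) → Fin k) : ℤ × (hw.Gen → ℤ) × (Fin (2 * t) → Bool) :=
    ((π 0 : ℤ), Function.update (fun v : hw.Gen => increment π v) g 0,
      fun i => decide (0 ≤ increment π i))
  let T : Finset (ℤ × (hw.Gen → ℤ) × (Fin (2 * t) → Bool)) :=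
    Icc 0 ((k : ℤ) - 1) ×ˢ
      Fintype.piFinset (Function.update (fun _ => Icc (-(k : ℤ)) k) g {0}) ×ˢ univ
  have hmaps : ∀ π ∈ hw.toepStarRepeat k g, code π ∈ (T : Set _) := by
    intro π _
    simp only [T, code, coe_product, Set.mem_prod, mem_coe, mem_Icc, Fintype.mem_piFinset,
      mem_univ, and_true]
    refine ⟨by have := (π 0).2; omega, fun v => ?_⟩
    by_cases hv : v = g
    · subst hv; simp
    · have := (π v.1.castSucc).2; have := (π v.1.succ).2
      simp only [Function.update_of_ne hv, mem_Icc, increment]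
      omega
  have hinj : Set.InjOn code (hw.toepStarRepeat k g) := by
    intro π hπ ρ hρ h
    simp only [code, Prod.mk.injEq] at h
    obtain ⟨h0, hgen, hsign⟩ := h
    refine hw.eq_of_increment_partner_eq hπ hρ (Fin.ext (by exact_mod_cast h0))
      (fun v hv => ?_) (fun i => ?_)
    · simpa [Function.update_of_ne hv] using congrFun hgen v
    · simpa using congrFun hsign i
  have hcard : #T = k * ((2 * k + 1) ^ (t - 1) * 4 ^ t) := by
    have hstart : ((k : ℤ) - 1 + 1 - 0).toNat = k := by omega
    have hslope : ((k : ℤ) + 1 - -k).toNat = 2 * k + 1 := by omega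
    simp only [T, card_product, Int.card_Icc, hstart, hslope, card_piFinset_update_singleton,
      hw.card_gen, card_univ, Fintype.card_fun, Fintype.card_bool, Fintype.card_fin, pow_mul]
    norm_num
  calc _ ≤ (T : Set _).ncard := Set.ncard_le_ncard_of_injOn code hmaps hinj
    _ = k * ((2 * k + 1) ^ (t - 1) * 4 ^ t) := by rw [Set.ncard_coe_finset, hcard]
    _ ≤ 12 ^ t * k ^ t :=
      mul_two_mul_add_one_pow_pred_le hk (hw.card_gen ▸ Fintype.card_pos_iff.2 ⟨g⟩)

lemma ncard_toepStar_diff_le {k : ℕ} (hk : 1 ≤ k) :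
    (toepStar t k w \ toepStarSigned t k w (fun _ => -1)).ncard ≤ t * 12 ^ t * k ^ t :=
  calc _ ≤ (⋃ g, hw.toepStarRepeat k g).ncard := Set.ncard_le_ncard (hw.toepStar_diff_subset k)
    _ ≤ ∑ g, (hw.toepStarRepeat k g).ncard := Set.ncard_iUnion_le_of_fintype _
    _ ≤ ∑ _g : hw.Gen, 12 ^ t * k ^ t := sum_le_sum fun g _ => hw.ncard_toepStarRepeat_le g hk
    _ = t * 12 ^ t * k ^ t := by rw [sum_const, card_univ, hw.card_gen, smul_eq_mul, mul_assoc]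

lemma tendsto_ncard_toepStar_diff :
    Tendsto (fun k : ℕ => ((toepStar t k w \ toepStarSigned t k w (fun _ => -1)).ncard : ℝ) /
      (k : ℝ) ^ (t + 1)) atTop (𝓝 0) := by
  refine squeeze_zero (fun k => by positivity) (fun k => ?_)
    (tendsto_const_div_atTop_nhds_zero_nat ((t * 12 ^ t : ℕ) : ℝ))
  rcases Nat.eq_zero_or_pos k with rfl | hk
  · simp
  have hkR : (0 : ℝ) < k := by exact_mod_cast hk
  rw [div_le_div_iff₀ (by positivity) hkR, pow_succ, ← mul_assoc]
  gcongr
  exact_mod_cast hw.ncard_toepStar_diff_le hk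

end PairMatched

/-- For any pair-matched word `w` of length `2t`, the limits of
`#Π*_{L_T,k,l₀}(w)/k^{t+1}` and `#Π*_{L_T,k}(w)/k^{t+1}` as `k → ∞` both exist
and are equal (to `p_T(w)`), where `l₀ = (−1,…,−1)`. -/
theorem toepStarSigned_l0_limit (t : ℕ) (w : Fin (2 * t) → ℕ) (hw : PairMatched w) :
    ∃ p : ℝ,
      Tendsto (fun k : ℕ => ((toepStar t k w).ncard : ℝ) / (k : ℝ) ^ (t + 1))
        atTop (nhds p) ∧
      Tendsto (fun k : ℕ =>
          ((toepStarSigned t k w (fun _ => -1)).ncard : ℝ) / (k : ℝ) ^ (t + 1))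
        atTop (nhds p) := by
  obtain ⟨p, hp⟩ := hw.spreadNorm.exists_tendsto_count
  rw [hw.card_gen] at hp
  have hsigned : Tendsto (fun k : ℕ =>
      ((toepStarSigned t k w (fun _ => -1)).ncard : ℝ) / (k : ℝ) ^ (t + 1)) atTop (𝓝 p) :=
    hp.congr fun k => by rw [← hw.ncard_toepStarSigned k, Int.cast_natCast]
  refine ⟨p, ?_, hsigned⟩
  simpa only [zero_add, ← add_div, ← Nat.cast_add,
    Set.ncard_sdiff_add_ncard_of_subset (fun _ h => h.1 : toepStarSigned t _ w _ ⊆ _)] using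
    hw.tendsto_ncard_toepStar_diff.add hsigned
end
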